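/- arXiv:math/0301086 — 2 statements merged into one kernel-verified Lean document; each statement's English description precedes it below -/
import Mathlib

section
/- Let A be a generalized Cartan matrix of hyperbolic type of size n+1 with n ≥ 3. Then for all indices i ≠ j one has A i j * A j i ≤ 3. (This corresponds to the paper's remark in the proof of Lemma 2 that the value a₁₂ = −4, i.e., a product of off-diagonal entries equal to 4, occurs only when the fundamental simplices are triangles, i.e., only in size 3.) -/
open Matrix

/-- A generalized Cartan matrix: `A i i = 2`, off-diagonal entries nonpositive,
and `A i j = 0 ↔ A j i = 0`. -/
def IsGCM {n : ℕ} (A : Matrix (Fin (n + 1)) (Fin (n + 1)) ℤ) : Prop :=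
  (∀ i, A i i = 2) ∧ (∀ i j, i ≠ j → A i j ≤ 0) ∧ (∀ i j, A i j = 0 ↔ A j i = 0)

/-- `A` is indecomposable: for every nonempty proper subset `S` of the index set,
there are `i ∈ S` and `j ∉ S` with `A i j ≠ 0`. -/
def IsIndecomposable {n : ℕ} (A : Matrix (Fin (n + 1)) (Fin (n + 1)) ℤ) : Prop :=
  ∀ S : Set (Fin (n + 1)), S.Nonempty → S ≠ Set.univ → ∃ i ∈ S, ∃ j, j ∉ S ∧ A i j ≠ 0

/-- `B` is a symmetrization of `A`: `B` is symmetric and `B i j = d i * A i j` for some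
positive rationals `d i`. -/
def IsSymmetrization {n : ℕ} (A : Matrix (Fin (n + 1)) (Fin (n + 1)) ℤ)
    (B : Matrix (Fin (n + 1)) (Fin (n + 1)) ℚ) : Prop :=
  B.IsSymm ∧ ∃ d : Fin (n + 1) → ℚ, (∀ i, 0 < d i) ∧ ∀ i j, B i j = d i * (A i j : ℚ)

/-- The principal submatrix of `B` on the index subset `S` is positive semidefinite:
the associated quadratic form is nonnegative on all vectors supported on `S`. -/
def PosSemidefOn {n : ℕ} (B : Matrix (Fin (n + 1)) (Fin (n + 1)) ℚ)
    (S : Set (Fin (n + 1))) : Prop :=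
  ∀ x : Fin (n + 1) → ℚ, (∀ i, i ∉ S → x i = 0) → 0 ≤ ∑ i, ∑ j, x i * B i j * x j

/-- `A` is of hyperbolic type with symmetrization `B`: `A` is an indecomposable generalized
Cartan matrix, `B` is a symmetrization of `A`, `B` is not positive semidefinite, and every
proper principal submatrix of `B` is positive semidefinite. -/
def IsHyperbolicWith {n : ℕ} (A : Matrix (Fin (n + 1)) (Fin (n + 1)) ℤ)
    (B : Matrix (Fin (n + 1)) (Fin (n + 1)) ℚ) : Prop :=
  IsGCM A ∧ IsIndecomposable A ∧ IsSymmetrization A B ∧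
    ¬ PosSemidefOn B Set.univ ∧
    ∀ S : Set (Fin (n + 1)), S ≠ Set.univ → PosSemidefOn B S

/-- `A` is a generalized Cartan matrix of hyperbolic type. -/
def IsHyperbolicType {n : ℕ} (A : Matrix (Fin (n + 1)) (Fin (n + 1)) ℤ) : Prop :=
  ∃ B, IsHyperbolicWith A B

/-!
Every `2 × 2` principal block of the symmetrization is positive semidefinite, so
`4 B i j ^ 2 = A i j A j i · B i i B j j ≤ 4 B i i B j j` gives `A i j A j i ≤ 4`. If equality
held, the `{i, j}` block would have a kernel vector `v`; since `v` is isotropic, positive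
semidefiniteness of each proper `3 × 3` block `{i, j, k}` (these exist once the size is at least
four) forces `(B v) k = 0`, which by the sign pattern of a Cartan matrix means that `k` is joined
to neither `i` nor `j`. Then `{i, j}` is a connected component, contradicting indecomposability.
-/

namespace Matrix.IsSymm

variable {ι K : Type*} [Fintype ι] {B : Matrix ι ι K}

lemma dotProduct_mulVec_comm [CommRing K] (hB : B.IsSymm) (x y : ι → K) :
    x ⬝ᵥ B *ᵥ y = y ⬝ᵥ B *ᵥ x := by
  rw [← dotProduct_transpose_mulVec, hB.eq]

lemma dotProduct_mulVec_add_smul [CommRing K] (hB : B.IsSymm) (x y : ι → K) (t : K) :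
    (x + t • y) ⬝ᵥ B *ᵥ (x + t • y) =
      y ⬝ᵥ B *ᵥ y * (t * t) + 2 * (y ⬝ᵥ B *ᵥ x) * t + x ⬝ᵥ B *ᵥ x := by
  simp only [mulVec_add, mulVec_smul, add_dotProduct, dotProduct_add, smul_dotProduct,
    dotProduct_smul, smul_eq_mul, hB.dotProduct_mulVec_comm x y]
  ring

lemma dotProduct_mulVec_single_add_single [CommRing K] [DecidableEq ι] (hB : B.IsSymm)
    (i j : ι) (a b : K) :
    (a • Pi.single i 1 + b • Pi.single j 1) ⬝ᵥ B *ᵥ (a • Pi.single i 1 + b • Pi.single j 1) =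
      a * a * B i i + 2 * a * b * B i j + b * b * B j j := by
  simp only [mulVec_add, mulVec_smul, mulVec_single_one, add_dotProduct, dotProduct_add,
    smul_dotProduct, dotProduct_smul, single_one_dotProduct, col_apply, smul_eq_mul, hB.apply i j]
  ring

lemma dotProduct_mulVec_eq_zero_of_isotropic [Field K] [LinearOrder K] [IsStrictOrderedRing K]
    (hB : B.IsSymm) {x y : ι → K} (hxy : ∀ t : K, 0 ≤ (x + t • y) ⬝ᵥ B *ᵥ (x + t • y))
    (hx : x ⬝ᵥ B *ᵥ x = 0) : y ⬝ᵥ B *ᵥ x = 0 := by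
  have := discrim_le_zero fun t => (hxy t).trans_eq (hB.dotProduct_mulVec_add_smul x y t)
  rw [hx, discrim] at this
  nlinarith [sq_nonneg (y ⬝ᵥ B *ᵥ x)]

end Matrix.IsSymm

section PosSemidefOn

variable {n : ℕ} {B : Matrix (Fin (n + 1)) (Fin (n + 1)) ℚ} {S : Set (Fin (n + 1))}

lemma posSemidefOn_iff :
    PosSemidefOn B S ↔ ∀ x, (∀ i, i ∉ S → x i = 0) → 0 ≤ x ⬝ᵥ B *ᵥ x := by
  have : ∀ x : Fin (n + 1) → ℚ, x ⬝ᵥ B *ᵥ x = ∑ i, ∑ j, x i * B i j * x j := fun x => by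
    simp only [dotProduct, mulVec, Finset.mul_sum, mul_assoc]
  simp only [PosSemidefOn, this]

lemma PosSemidefOn.mulVec_apply_eq_zero (hB : B.IsSymm) (h : PosSemidefOn B S)
    {x : Fin (n + 1) → ℚ} (hxS : ∀ i, i ∉ S → x i = 0) (hx : x ⬝ᵥ B *ᵥ x = 0)
    {k : Fin (n + 1)} (hk : k ∈ S) : (B *ᵥ x) k = 0 := by
  rw [← single_one_dotProduct k (B *ᵥ x)]
  refine hB.dotProduct_mulVec_eq_zero_of_isotropic
    (fun t => posSemidefOn_iff.1 h _ fun i hi => ?_) hx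
  simp [hxS i hi, (ne_of_mem_of_not_mem hk hi).symm]

variable {i j : Fin (n + 1)}

lemma PosSemidefOn.apply_sq_le (hB : B.IsSymm) (h : PosSemidefOn B {i, j}) (hj : 0 < B j j) :
    B i j ^ 2 ≤ B i i * B j j := by
  have := posSemidefOn_iff.1 h (B j j • Pi.single i 1 + (-B i j) • Pi.single j 1) fun m hm => by
    simp_all
  rw [hB.dotProduct_mulVec_single_add_single] at this
  nlinarith

lemma PosSemidefOn.mul_apply_eq_mul_apply_of_sq_eq (hB : B.IsSymm) {k : Fin (n + 1)}
    (h : PosSemidefOn B {i, j, k}) (heq : B i j ^ 2 = B i i * B j j) :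
    B j j * B k i = B i j * B k j := by
  have := h.mulVec_apply_eq_zero hB (k := k)
    (x := B j j • Pi.single i 1 + (-B i j) • Pi.single j 1)
    (fun m hm => by simp_all)
    (by rw [hB.dotProduct_mulVec_single_add_single]; linear_combination (-B j j) * heq)
    (by simp)
  simp only [mulVec_add, mulVec_smul, mulVec_single_one, Pi.add_apply, Pi.smul_apply, col_apply,
    smul_eq_mul] at this
  linarith

end PosSemidefOn

lemma Set.ne_univ_of_ncard_lt_card {α : Type*} [Finite α] {s : Set α}
    (h : s.ncard < Nat.card α) : s ≠ Set.univ := by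
  rintro rfl
  simp at h

lemma Fin.pair_ne_univ {n : ℕ} (hn : 2 ≤ n) (i j : Fin (n + 1)) :
    ({i, j} : Set (Fin (n + 1))) ≠ Set.univ :=
  Set.ne_univ_of_ncard_lt_card <| by
    grind [Set.ncard_insert_le, Set.ncard_singleton, Nat.card_eq_fintype_card, Fintype.card_fin]

lemma Fin.triple_ne_univ {n : ℕ} (hn : 3 ≤ n) (i j k : Fin (n + 1)) :
    ({i, j, k} : Set (Fin (n + 1))) ≠ Set.univ :=
  Set.ne_univ_of_ncard_lt_card <| by
    grind [Set.ncard_insert_le, Set.ncard_singleton, Nat.card_eq_fintype_card, Fintype.card_fin]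

section Cartan

variable {n : ℕ} {A : Matrix (Fin (n + 1)) (Fin (n + 1)) ℤ}
  {B : Matrix (Fin (n + 1)) (Fin (n + 1)) ℚ} {i j k : Fin (n + 1)}

namespace IsSymmetrization

variable (hB : IsSymmetrization A B)
include hB

lemma apply_eq_zero_iff : B i j = 0 ↔ A i j = 0 := by
  obtain ⟨-, d, hd, hBd⟩ := hB
  simp [hBd, (hd i).ne']

lemma diag_pos (hA : IsGCM A) : 0 < B i i := by
  obtain ⟨-, d, hd, hBd⟩ := hB
  simpa [hBd, hA.1 i] using hd i

lemma apply_nonpos (hA : IsGCM A) (hij : i ≠ j) : B i j ≤ 0 := by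
  obtain ⟨-, d, hd, hBd⟩ := hB
  rw [hBd]
  exact mul_nonpos_of_nonneg_of_nonpos (hd i).le (by exact_mod_cast hA.2.1 i j hij)

lemma four_mul_apply_sq (hA : IsGCM A) :
    4 * B i j ^ 2 = (A i j * A j i : ℤ) * (B i i * B j j) := by
  obtain ⟨hsymm, d, -, hBd⟩ := hB
  have hji : B i j = d j * A j i := by rw [← hBd, hsymm.apply]
  rw [hBd i i, hBd j j, hA.1 i, hA.1 j, sq]
  nth_rewrite 2 [hji]
  rw [hBd i j]
  push_cast
  ring

end IsSymmetrization

namespace IsHyperbolicWith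

variable (h : IsHyperbolicWith A B)
include h

lemma mul_le_four (hn : 2 ≤ n) (i j : Fin (n + 1)) : A i j * A j i ≤ 4 := by
  obtain ⟨hA, -, hB, -, hPSD⟩ := h
  have hle := (hPSD _ (Fin.pair_ne_univ hn i j)).apply_sq_le hB.1 (hB.diag_pos hA)
  have hprod := mul_pos (hB.diag_pos hA (i := i)) (hB.diag_pos hA (i := j))
  have : ((A i j * A j i : ℤ) : ℚ) ≤ 4 := by
    nlinarith [hB.four_mul_apply_sq hA (i := i) (j := j)]
  exact_mod_cast this

lemma apply_eq_zero_of_mul_eq_four (hn : 3 ≤ n) (hij : i ≠ j) (h4 : A i j * A j i = 4)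
    (hki : k ≠ i) (hkj : k ≠ j) : A i k = 0 ∧ A j k = 0 := by
  obtain ⟨hA, -, hB, -, hPSD⟩ := h
  have hsq : B i j ^ 2 = B i i * B j j := by
    have := hB.four_mul_apply_sq hA (i := i) (j := j)
    rw [h4] at this
    push_cast at this
    linarith
  have hker := (hPSD _ (Fin.triple_ne_univ hn i j k)).mul_apply_eq_mul_apply_of_sq_eq hB.1 hsq
  have hij_neg : B i j < 0 := (hB.apply_nonpos hA hij).lt_of_ne fun h0 => by
    nlinarith [hB.diag_pos hA (i := i), hB.diag_pos hA (i := j)]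
  have hjj := hB.diag_pos hA (i := j)
  have hki' := hB.apply_nonpos hA hki
  have hkj' := hB.apply_nonpos hA hkj
  -- `hker` equates a nonpositive product with a nonnegative one
  have hki0 : B k i = 0 := by nlinarith
  have hkj0 : B k j = 0 := by nlinarith
  rw [← hA.2.2, ← hA.2.2 k j, ← hB.apply_eq_zero_iff, ← hB.apply_eq_zero_iff]
  exact ⟨hki0, hkj0⟩

lemma mul_ne_four (hn : 3 ≤ n) (hij : i ≠ j) : A i j * A j i ≠ 4 := by
  intro h4
  obtain ⟨p, hp, q, hq, hpq⟩ := h.2.1 {i, j} ⟨i, by simp⟩ (Fin.pair_ne_univ (by omega) i j)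
  simp only [Set.mem_insert_iff, Set.mem_singleton_iff, not_or] at hp hq
  have := h.apply_eq_zero_of_mul_eq_four hn hij h4 hq.1 hq.2
  rcases hp with rfl | rfl
  exacts [hpq this.1, hpq this.2]

end IsHyperbolicWith

end Cartan

/-- For a generalized Cartan matrix of hyperbolic type of size `n+1` with `n ≥ 3`,
one has `A i j * A j i ≤ 3` for all `i ≠ j`. -/
theorem gcm_hyperbolic_offdiag_prod_le_three {n : ℕ} (hn : 3 ≤ n)
    (A : Matrix (Fin (n + 1)) (Fin (n + 1)) ℤ) (hA : IsHyperbolicType A) :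
    ∀ i j, i ≠ j → A i j * A j i ≤ 3 := by
  obtain ⟨B, h⟩ := hA
  intro i j hij
  have := h.mul_le_four (by omega) i j
  have := h.mul_ne_four hn hij
  omega
end

section
/- Let A be a generalized Cartan matrix of hyperbolic type of size n+1 with symmetrization B. Then the symmetric bilinear form on ℚ^{n+1} given by ⟨x,y⟩ = ∑_{i,j} x i * B i j * y j has signature (n,1): it is nondegenerate, there exists an n-dimensional ℚ-subspace of ℚ^{n+1} on which the form is positive definite, and there exists a vector v with ⟨v,v⟩ < 0 (so the maximal dimension of a subspace on which the form is negative definite equals 1). -/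
open Matrix

/-- The symmetric bilinear form on `ℚ^{n+1}` associated to `B`. -/
def bform {n : ℕ} (B : Matrix (Fin (n + 1)) (Fin (n + 1)) ℚ)
    (x y : Fin (n + 1) → ℚ) : ℚ :=
  ∑ i, ∑ j, x i * B i j * y j

lemma bform_eq {n : ℕ} (B : Matrix (Fin (n+1)) (Fin (n+1)) ℚ) (x y : Fin (n+1) → ℚ) :
    bform B x y = x ⬝ᵥ B *ᵥ y := by
  simp [bform, dotProduct, Matrix.mulVec, Finset.mul_sum, mul_assoc]

lemma bform_comm {n : ℕ} {B : Matrix (Fin (n+1)) (Fin (n+1)) ℚ} (hB : B.IsSymm)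
    (x y : Fin (n+1) → ℚ) : bform B x y = bform B y x := by
  unfold bform
  rw [Finset.sum_comm]
  refine Finset.sum_congr rfl fun i _ => Finset.sum_congr rfl fun j _ => ?_
  rw [hB.apply i j]
  ring

lemma bform_expand {n : ℕ} {B : Matrix (Fin (n+1)) (Fin (n+1)) ℚ} (hB : B.IsSymm)
    (a b : ℚ) (v x : Fin (n+1) → ℚ) :
    bform B (a • v + b • x) (a • v + b • x)
      = a^2 * bform B v v + (2*a*b) * bform B v x + b^2 * bform B x x := by
  have h := bform_comm hB x v
  simp only [bform_eq] at h ⊢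
  simp only [Matrix.mulVec_add, Matrix.mulVec_smul, dotProduct_add, dotProduct_smul,
    add_dotProduct, smul_dotProduct, smul_eq_mul]
  rw [h]; ring

lemma bform_key {n : ℕ} {B : Matrix (Fin (n+1)) (Fin (n+1)) ℚ} (hB : B.IsSymm)
    (hpsd : ∀ S : Set (Fin (n + 1)), S ≠ Set.univ → PosSemidefOn B S)
    {v x : Fin (n+1) → ℚ} (hv : bform B v v < 0) (hvx : bform B v x = 0)
    (hx : bform B x x ≤ 0) : x = 0 := by
  funext k
  set w : Fin (n+1) → ℚ := (x k) • v + (-(v k)) • x with hw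
  have hwk : w k = 0 := by simp [hw]; ring
  have hS : ({k}ᶜ : Set (Fin (n+1))) ≠ Set.univ := by
    intro h
    have : k ∈ ({k}ᶜ : Set (Fin (n+1))) := h ▸ Set.mem_univ k
    simp at this
  have hge : 0 ≤ bform B w w := by
    have := hpsd _ hS w (fun i hi => by
      simp only [Set.mem_compl_iff, Set.mem_singleton_iff, not_not] at hi
      rw [hi]; exact hwk)
    simpa [bform] using this
  have hexp := bform_expand hB (x k) (-(v k)) v x
  rw [← hw] at hexp
  rw [hvx, mul_zero, neg_sq] at hexp
  have h3 : (v k)^2 * bform B x x ≤ 0 := by nlinarith [sq_nonneg (v k)]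
  have hle : (x k)^2 * bform B v v ≤ 0 := by nlinarith [sq_nonneg (x k)]
  have h1 : (x k)^2 * bform B v v = 0 := by linarith
  have h2 : (x k)^2 = 0 := by
    rcases mul_eq_zero.1 h1 with h | h
    · exact h
    · exact absurd h (ne_of_lt hv)
  simpa using pow_eq_zero_iff (n := 2) (by norm_num) |>.1 h2

/-- For a generalized Cartan matrix `A` of hyperbolic type with symmetrization `B`,
the bilinear form `⟨x,y⟩ = ∑ x i * B i j * y j` has signature `(n,1)`: it is nondegenerate,
it is positive definite on some `n`-dimensional subspace, there is a vector of negative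
norm, and every subspace on which the form is negative definite has dimension at most `1`. -/
theorem hyperbolic_signature {n : ℕ} (A : Matrix (Fin (n + 1)) (Fin (n + 1)) ℤ)
    (B : Matrix (Fin (n + 1)) (Fin (n + 1)) ℚ) (hAB : IsHyperbolicWith A B) :
    (∀ x : Fin (n + 1) → ℚ, (∀ y, bform B x y = 0) → x = 0) ∧
    (∃ P : Submodule ℚ (Fin (n + 1) → ℚ), Module.finrank ℚ P = n ∧
        ∀ x ∈ P, x ≠ 0 → 0 < bform B x x) ∧
    (∃ v : Fin (n + 1) → ℚ, bform B v v < 0) ∧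
    (∀ N : Submodule ℚ (Fin (n + 1) → ℚ), (∀ x ∈ N, x ≠ 0 → bform B x x < 0) →
        Module.finrank ℚ N ≤ 1) := by
  obtain ⟨-, -, ⟨hB, -⟩, hnpsd, hpsd⟩ := hAB
  -- a vector of negative norm
  obtain ⟨v, -, hv⟩ : ∃ v : Fin (n+1) → ℚ,
      (∀ i, i ∉ (Set.univ : Set (Fin (n+1))) → v i = 0) ∧
      ¬ 0 ≤ ∑ i, ∑ j, v i * B i j * v j := by
    by_contra h
    push_neg at h
    exact hnpsd h
  have hv : bform B v v < 0 := lt_of_not_ge hv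
  refine ⟨?_, ?_, ⟨v, hv⟩, ?_⟩
  · -- nondegeneracy
    intro x hx
    exact bform_key hB hpsd hv (by rw [bform_comm hB]; exact hx v) (le_of_eq (hx x))
  · -- positive definite hyperplane v^⊥
    let f : (Fin (n+1) → ℚ) →ₗ[ℚ] ℚ :=
      { toFun := fun y => bform B v y
        map_add' := fun y z => by
          simp [bform_eq, Matrix.mulVec_add, dotProduct_add]
        map_smul' := fun c y => by
          simp [bform_eq, Matrix.mulVec_smul, dotProduct_smul] }
    refine ⟨LinearMap.ker f, ?_, ?_⟩
    · have hrk : Module.finrank ℚ (LinearMap.range f) +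
          Module.finrank ℚ (LinearMap.ker f) = n + 1 := by
        have := LinearMap.finrank_range_add_finrank_ker f
        simpa using this
      have hr1 : Module.finrank ℚ (LinearMap.range f) = 1 := by
        have hne : LinearMap.range f ≠ ⊥ := by
          intro h
          have : f v = 0 := by
            have : f v ∈ LinearMap.range f := LinearMap.mem_range_self f v
            rw [h] at this
            simpa using this
          exact absurd this (by simpa [f] using ne_of_lt hv)
        have hle : Module.finrank ℚ (LinearMap.range f) ≤ 1 := by
          simpa using (LinearMap.range f).finrank_le
        have hpos : 0 < Module.finrank ℚ (LinearMap.range f) := by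
          rcases Nat.eq_zero_or_pos (Module.finrank ℚ (LinearMap.range f)) with h0 | h0
          · exact absurd (Submodule.finrank_eq_zero.mp h0) hne
          · exact h0
        omega
      omega
    · intro x hxP hx0
      by_contra h
      push_neg at h
      have hvx : bform B v x = 0 := hxP
      exact hx0 (bform_key hB hpsd hv hvx h)
  · -- negative index at most 1
    intro N hN
    rcases eq_or_ne N ⊥ with rfl | hne
    · simp
    · obtain ⟨u, huN, hu0⟩ := Submodule.exists_mem_ne_zero_of_ne_bot hne
      have hu : bform B u u < 0 := hN u huN hu0
      have hsub : N ≤ Submodule.span ℚ {u} := by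
        intro x hx
        set c : ℚ := bform B u x / bform B u u with hc
        set x' : Fin (n+1) → ℚ := x - c • u with hx'
        have hx'N : x' ∈ N := Submodule.sub_mem N hx (Submodule.smul_mem N c huN)
        have hux' : bform B u x' = 0 := by
          have hsub' : bform B u x' = bform B u x - c * bform B u u := by
            simp [hx', bform_eq, Matrix.mulVec_sub, Matrix.mulVec_smul,
              dotProduct_sub, dotProduct_smul]
          rw [hsub', hc, div_mul_cancel₀ _ (ne_of_lt hu)]
          ring
        have hx'0 : x' = 0 := by
          by_contra h0
          have := hN x' hx'N h0
          exact absurd (bform_key hB hpsd hu hux' (le_of_lt this)) h0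
        have : x = c • u := by rw [← sub_eq_zero]; exact hx'0
        rw [this]
        exact Submodule.smul_mem _ c (Submodule.mem_span_singleton_self u)
      calc Module.finrank ℚ N ≤ Module.finrank ℚ (Submodule.span ℚ ({u} : Set (Fin (n+1) → ℚ))) :=
            Submodule.finrank_mono hsub
        _ = 1 := finrank_span_singleton hu0
end
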